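/- Let N ≥ 2, P = N+1, L = NP, let π be a permutation of Z_N with inverse π^{−1}, and set g_k = π^{−1}(k). Fix s_0 with 0 ≤ s_0 < P, define the frequency-domain sequence Û by û_{Pr+s} = 0 if s = s_0; û_{Pr+s} = √(P/N)·ω_N^{r·g_s}·ω_{NP}^{s·g_s} if s < s_0; û_{Pr+s} = √(P/N)·ω_N^{r·g_{s−1}}·ω_{NP}^{s·g_{s−1}} if s > s_0, and let U be the inverse unitary DFT of Û, i.e. u_t = (1/√L) Σ_{n=0}^{L-1} û_n ω_L^{nt}. Then U is unimodular: |u_t| = 1 for every 0 ≤ t < L. -/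

import Mathlib

/-- Inverse unitary DFT of a length-`L` complex sequence:
`u_t = (1/√L) Σ_{n=0}^{L-1} û_n · e^{2πi·n·t/L}`. -/
noncomputable def iudft (L : ℕ) (chat : ℕ → ℂ) (t : ℕ) : ℂ :=
  ((Real.sqrt L : ℝ) : ℂ)⁻¹ * ∑ n ∈ Finset.range L,
    chat n * Complex.exp (2 * (Real.pi : ℂ) * Complex.I * (n : ℂ) * (t : ℂ) / (L : ℂ))

/-- The frequency-domain sequence of Construction 2, with `P = N+1`: writing
`n = P·r + s` (`r = n/P`, `s = n%P`), `û_n = 0` if `s = s₀`;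
`û_n = √(P/N)·ω_N^{r·g(s)}·ω_{NP}^{s·g(s)}` if `s < s₀`; and
`û_n = √(P/N)·ω_N^{r·g(s−1)}·ω_{NP}^{s·g(s−1)}` if `s > s₀`. -/
noncomputable def uhatC2 (N : ℕ) (g : ℕ → ℕ) (s0 : ℕ) (n : ℕ) : ℂ :=
  if n % (N + 1) = s0 then 0
  else if n % (N + 1) < s0 then
    (Real.sqrt (((N : ℝ) + 1) / (N : ℝ)) : ℂ) *
      Complex.exp (2 * (Real.pi : ℂ) * Complex.I *
        (((n / (N + 1)) * g (n % (N + 1)) : ℕ) : ℂ) / (N : ℂ)) *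
      Complex.exp (2 * (Real.pi : ℂ) * Complex.I *
        (((n % (N + 1)) * g (n % (N + 1)) : ℕ) : ℂ) / ((N * (N + 1) : ℕ) : ℂ))
  else
    (Real.sqrt (((N : ℝ) + 1) / (N : ℝ)) : ℂ) *
      Complex.exp (2 * (Real.pi : ℂ) * Complex.I *
        (((n / (N + 1)) * g (n % (N + 1) - 1) : ℕ) : ℂ) / (N : ℂ)) *
      Complex.exp (2 * (Real.pi : ℂ) * Complex.I *
        (((n % (N + 1)) * g (n % (N + 1) - 1) : ℕ) : ℂ) / ((N * (N + 1) : ℕ) : ℂ))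

lemma sum_range_mul'' {M : Type*} [AddCommMonoid M] (a b : ℕ) (f : ℕ → M) :
    ∑ n ∈ Finset.range (a * b), f n
      = ∑ r ∈ Finset.range a, ∑ s ∈ Finset.range b, f (b * r + s) := by
  induction a with
  | zero => simp
  | succ a ih =>
    have h : (a + 1) * b = a * b + b := by ring
    rw [h, Finset.sum_range_add, ih, Finset.sum_range_succ]
    congr 1
    apply Finset.sum_congr rfl
    intro s _
    congr 1
    ring

lemma sum_zeta (N c : ℕ) (hN : 0 < N) :
    ∑ r ∈ Finset.range N, (Complex.exp (2 * Real.pi * Complex.I * c / N)) ^ r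
      = if N ∣ c then (N : ℂ) else 0 := by
  have hNC : (N : ℂ) ≠ 0 := Nat.cast_ne_zero.mpr hN.ne'
  have h2 : (2 * (Real.pi:ℂ) * Complex.I) ≠ 0 := by
    simp [Real.pi_ne_zero, Complex.I_ne_zero]
  by_cases h : N ∣ c
  · obtain ⟨m, rfl⟩ := h
    have harg : (2 * (Real.pi:ℂ) * Complex.I * ((N*m : ℕ):ℂ) / N) = (m : ℤ) * (2 * Real.pi * Complex.I) := by
      push_cast; field_simp
    rw [harg, Complex.exp_int_mul_two_pi_mul_I]
    simp [Nat.dvd_mul_right]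
  · have hζ : Complex.exp (2 * Real.pi * Complex.I * c / N) ≠ 1 := by
      rw [Ne, Complex.exp_eq_one_iff]
      rintro ⟨m, hm⟩
      apply h
      have hm2 : 2 * (Real.pi:ℂ) * Complex.I * c = 2 * Real.pi * Complex.I * (m * N) := by
        field_simp at hm; linear_combination (2 * (Real.pi:ℂ) * Complex.I) * hm
      have hc : (c : ℂ) = (m : ℂ) * N := mul_left_cancel₀ h2 hm2
      have hci : (c : ℤ) = m * N := by exact_mod_cast hc
      have hdvd : (N : ℤ) ∣ (c : ℤ) := ⟨m, by linarith⟩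
      exact_mod_cast hdvd
    rw [geom_sum_eq hζ]
    have hpow : Complex.exp (2 * Real.pi * Complex.I * c / N) ^ N = 1 := by
      rw [← Complex.exp_nat_mul]
      have harg : (N:ℂ) * (2 * Real.pi * Complex.I * c / N) = (c : ℤ) * (2 * Real.pi * Complex.I) := by
        push_cast; field_simp
      rw [harg, Complex.exp_int_mul_two_pi_mul_I]
    rw [hpow]
    simp [h]

lemma norm_exp_aux (a b : ℕ) : ‖Complex.exp (2 * Real.pi * Complex.I * (a:ℂ) / (b:ℂ))‖ = 1 := by
  have h : 2 * (Real.pi:ℂ) * Complex.I * a / b = ((2 * Real.pi * a / b : ℝ) : ℂ) * Complex.I := by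
    push_cast; ring
  rw [h, Complex.norm_exp_ofReal_mul_I]

lemma term_collapse (N t s r c : ℕ) (hN : 0 < N) (C : ℂ) :
    C * Complex.exp (2 * Real.pi * Complex.I * ((r * c : ℕ) : ℂ) / (N:ℂ))
      * Complex.exp (2 * Real.pi * Complex.I * ((s * c : ℕ) : ℂ) / ((N * (N+1) : ℕ) : ℂ))
      * Complex.exp (2 * Real.pi * Complex.I * (((N+1) * r + s : ℕ) : ℂ) * (t : ℂ) / ((N * (N+1) : ℕ) : ℂ))
    = (C * Complex.exp (2 * Real.pi * Complex.I * ((s * (c + t) : ℕ) : ℂ) / ((N * (N+1) : ℕ) : ℂ)))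
      * (Complex.exp (2 * Real.pi * Complex.I * ((c + t : ℕ) : ℂ) / (N:ℂ))) ^ r := by
  have hNC : (N : ℂ) ≠ 0 := Nat.cast_ne_zero.mpr hN.ne'
  have hPC : ((N : ℂ) + 1) ≠ 0 := by
    intro hcon
    have h1 : (N:ℂ) = -1 := by linear_combination hcon
    have h2 : ((N:ℝ)) = -1 := by exact_mod_cast congrArg Complex.re h1
    nlinarith [Nat.cast_nonneg (α := ℝ) N]
  rw [← Complex.exp_nat_mul]
  have key : Complex.exp (2 * Real.pi * Complex.I * ((r * c : ℕ) : ℂ) / (N:ℂ))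
      * Complex.exp (2 * Real.pi * Complex.I * ((s * c : ℕ) : ℂ) / ((N * (N+1) : ℕ) : ℂ))
      * Complex.exp (2 * Real.pi * Complex.I * (((N+1) * r + s : ℕ) : ℂ) * (t : ℂ) / ((N * (N+1) : ℕ) : ℂ))
      = Complex.exp (2 * Real.pi * Complex.I * ((s * (c + t) : ℕ) : ℂ) / ((N * (N+1) : ℕ) : ℂ))
      * Complex.exp ((r:ℂ) * (2 * Real.pi * Complex.I * ((c + t : ℕ) : ℂ) / (N:ℂ))) := by
    rw [← Complex.exp_add, ← Complex.exp_add, ← Complex.exp_add]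
    congr 1
    push_cast
    field_simp
    ring
  calc C * Complex.exp (2 * Real.pi * Complex.I * ((r * c : ℕ) : ℂ) / (N:ℂ))
      * Complex.exp (2 * Real.pi * Complex.I * ((s * c : ℕ) : ℂ) / ((N * (N+1) : ℕ) : ℂ))
      * Complex.exp (2 * Real.pi * Complex.I * (((N+1) * r + s : ℕ) : ℂ) * (t : ℂ) / ((N * (N+1) : ℕ) : ℂ))
      = C * (Complex.exp (2 * Real.pi * Complex.I * ((r * c : ℕ) : ℂ) / (N:ℂ))
      * Complex.exp (2 * Real.pi * Complex.I * ((s * c : ℕ) : ℂ) / ((N * (N+1) : ℕ) : ℂ))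
      * Complex.exp (2 * Real.pi * Complex.I * (((N+1) * r + s : ℕ) : ℂ) * (t : ℂ) / ((N * (N+1) : ℕ) : ℂ))) := by ring
    _ = C * (Complex.exp (2 * Real.pi * Complex.I * ((s * (c + t) : ℕ) : ℂ) / ((N * (N+1) : ℕ) : ℂ))
      * Complex.exp ((r:ℂ) * (2 * Real.pi * Complex.I * ((c + t : ℕ) : ℂ) / (N:ℂ)))) := by rw [key]
    _ = _ := by ring

lemma innerSumC2 (N t s0 s : ℕ) (hN : 0 < N) (g : ℕ → ℕ) (hs : s < N + 1) (hss0 : s ≠ s0) :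
    (∑ r ∈ Finset.range N, uhatC2 N g s0 ((N+1) * r + s) *
        Complex.exp (2 * Real.pi * Complex.I * ((((N+1) * r + s : ℕ)) : ℂ) * (t : ℂ) / ((N * (N+1) : ℕ) : ℂ)))
    = if N ∣ (if s < s0 then g s else g (s-1)) + t then
        ((Real.sqrt (((N : ℝ) + 1) / (N : ℝ)) : ℂ) *
          Complex.exp (2 * Real.pi * Complex.I *
            ((s * ((if s < s0 then g s else g (s-1)) + t) : ℕ) : ℂ) / ((N * (N+1) : ℕ) : ℂ))) * (N : ℂ)
      else 0 := by
  set c := if s < s0 then g s else g (s-1) with hc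
  have trans : ∀ r ∈ Finset.range N,
      uhatC2 N g s0 ((N+1) * r + s) *
        Complex.exp (2 * Real.pi * Complex.I * ((((N+1) * r + s : ℕ)) : ℂ) * (t : ℂ) / ((N * (N+1) : ℕ) : ℂ))
      = ((Real.sqrt (((N : ℝ) + 1) / (N : ℝ)) : ℂ) *
          Complex.exp (2 * Real.pi * Complex.I *
            ((s * (c + t) : ℕ) : ℂ) / ((N * (N+1) : ℕ) : ℂ)))
        * (Complex.exp (2 * Real.pi * Complex.I * ((c + t : ℕ) : ℂ) / (N:ℂ))) ^ r := by
    intro r _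
    have hmod : ((N+1) * r + s) % (N+1) = s := by
      rw [Nat.mul_add_mod, Nat.mod_eq_of_lt hs]
    have hdiv : ((N+1) * r + s) / (N+1) = r := by
      rw [Nat.mul_add_div (by omega : 0 < N+1), Nat.div_eq_of_lt hs, add_zero]
    simp only [uhatC2, hmod, hdiv, if_neg hss0]
    split_ifs with hlt
    · rw [hc, if_pos hlt]
      exact term_collapse N t s r (g s) hN _
    · rw [hc, if_neg hlt]
      exact term_collapse N t s r (g (s-1)) hN _
  rw [Finset.sum_congr rfl trans, ← Finset.mul_sum, sum_zeta N (c + t) hN, mul_ite, mul_zero]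

/-- let `N ≥ 2`, `P = N+1`, `L = NP`, `σ` a permutation of `Z_N` with
`g_k = σ⁻¹(k)`, and `0 ≤ s₀ < P`. Then the time-domain sequence `U` (the inverse
unitary DFT of the Construction-2 frequency sequence `Û`) is unimodular:
`|u_t| = 1` for every `0 ≤ t < L`. -/
theorem stmt13 (N : ℕ) (hN : 2 ≤ N) (σ : Equiv.Perm (ZMod N))
    (s0 : ℕ) (hs0 : s0 < N + 1)
    (U : ℕ → ℂ)
    (hU : ∀ t, U t =
      iudft (N * (N + 1)) (uhatC2 N (fun k => (σ.symm ((k : ℕ) : ZMod N)).val) s0) t)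
    (t : ℕ) (ht : t < N * (N + 1)) :
    ‖U t‖ = 1 := by
  haveI : NeZero N := ⟨by omega⟩
  have hN0 : 0 < N := by omega
  set g : ℕ → ℕ := fun k => (σ.symm ((k : ℕ) : ZMod N)).val with hg
  set s' : ℕ := (σ (-(t : ZMod N))).val with hs'
  have hs'N : s' < N := ZMod.val_lt _
  set st : ℕ := if s' < s0 then s' else s' + 1 with hst
  have hstP : st < N + 1 := by rw [hst]; split_ifs <;> omega
  have hsts0 : st ≠ s0 := by rw [hst]; split_ifs <;> omega
  -- key divisibility characterisation
  have key : ∀ m : ℕ, m < N → (N ∣ g m + t ↔ m = s') := by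
    intro m hm
    have hcast : ((g m : ℕ) : ZMod N) = σ.symm ((m : ℕ) : ZMod N) :=
      ZMod.natCast_rightInverse _
    constructor
    · intro hd
      have h0 : ((g m + t : ℕ) : ZMod N) = 0 := (ZMod.natCast_eq_zero_iff _ _).mpr hd
      push_cast at h0
      rw [hcast] at h0
      have h1 : σ.symm ((m : ℕ) : ZMod N) = -(t : ZMod N) := by
        linear_combination h0
      have h2 : ((m : ℕ) : ZMod N) = σ (-(t : ZMod N)) := by
        rw [← h1, Equiv.apply_symm_apply]
      have := congrArg ZMod.val h2
      rwa [ZMod.val_cast_of_lt hm] at this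
    · intro hms'
      subst hms'
      apply (ZMod.natCast_eq_zero_iff _ _).mp
      push_cast
      rw [hcast, hs', ZMod.natCast_rightInverse, Equiv.symm_apply_apply]
      ring
  rw [hU t]
  unfold iudft
  rw [sum_range_mul'' N (N+1), Finset.sum_comm]
  -- all terms except s = st vanish
  rw [Finset.sum_eq_single_of_mem st (Finset.mem_range.mpr hstP) ?_]
  · -- evaluate the surviving term
    set c : ℕ := if st < s0 then g st else g (st - 1) with hcdef
    have hcs' : c = g s' := by
      rw [hcdef, hst]
      split_ifs <;> simp_all <;> omega
    have hdvd : N ∣ c + t := by rw [hcs']; exact (key s' hs'N).mpr rfl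
    rw [innerSumC2 N t s0 st hN0 g hstP hsts0]
    rw [← hcdef, if_pos hdvd]
    -- now the norm computation
    rw [norm_mul, norm_mul, norm_mul, norm_exp_aux, norm_inv]
    have hC : ‖((Real.sqrt (((N : ℝ) + 1) / (N : ℝ)) : ℝ) : ℂ)‖ = Real.sqrt (((N : ℝ) + 1) / (N : ℝ)) := by
      rw [Complex.norm_real, Real.norm_eq_abs, abs_of_nonneg (Real.sqrt_nonneg _)]
    have hL : ‖((Real.sqrt ((N * (N+1) : ℕ) : ℝ) : ℝ) : ℂ)‖ = Real.sqrt ((N * (N+1) : ℕ) : ℝ) := by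
      rw [Complex.norm_real, Real.norm_eq_abs, abs_of_nonneg (Real.sqrt_nonneg _)]
    rw [hC, hL, Complex.norm_natCast]
    have hNR : (0:ℝ) < (N:ℝ) := by exact_mod_cast hN0
    have h2 : Real.sqrt (((N:ℝ) * ((N:ℝ)+1))) = Real.sqrt N * Real.sqrt ((N:ℝ)+1) :=
      Real.sqrt_mul (by positivity) _
    have h1 : Real.sqrt (((N : ℝ) + 1) / (N : ℝ)) = Real.sqrt ((N:ℝ)+1) / Real.sqrt N :=
      Real.sqrt_div (by positivity) _
    have hcastL : ((N * (N+1) : ℕ) : ℝ) = (N:ℝ) * ((N:ℝ)+1) := by push_cast; ring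
    rw [hcastL, h2, h1]
    have hsN : Real.sqrt (N:ℝ) ≠ 0 := by positivity
    have hsP : Real.sqrt ((N:ℝ)+1) ≠ 0 := by positivity
    have hNs : Real.sqrt (N:ℝ) * Real.sqrt (N:ℝ) = (N:ℝ) := Real.mul_self_sqrt (by positivity)
    field_simp
    nlinarith [hNs, Real.sqrt_nonneg ((N:ℝ)+1), Real.sqrt_nonneg (N:ℝ)]
  · -- vanishing terms
    intro s hsmem hne
    rw [Finset.mem_range] at hsmem
    by_cases hss0 : s = s0
    · apply Finset.sum_eq_zero
      intro r _
      have hmod : ((N+1) * r + s) % (N+1) = s := by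
        rw [Nat.mul_add_mod, Nat.mod_eq_of_lt hsmem]
      simp only [uhatC2, hmod, if_pos hss0, zero_mul]
    · rw [innerSumC2 N t s0 s hN0 g hsmem hss0]
      have hnd : ¬ N ∣ (if s < s0 then g s else g (s-1)) + t := by
        set m : ℕ := if s < s0 then s else s - 1 with hm
        have hmN : m < N := by rw [hm]; split_ifs <;> omega
        have hcm : (if s < s0 then g s else g (s-1)) = g m := by
          rw [hm]; split_ifs <;> rfl
        rw [hcm, key m hmN]
        intro hms'
        apply hne
        rw [hst, ← hms', hm]
        split_ifs <;> omega
      rw [if_neg hnd]
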